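/- arXiv:1502.05963 — 2 statements merged into one kernel-verified Lean document; each statement's English description precedes it below -/
import Mathlib

section
/- For any regular bounded domain Ω ⊆ ℝ³ with C¹ boundary, and any C² solution u of -Δu = u - u³ on a neighborhood of the closure of Ω, the balancing formula ∫_{∂Ω} [(½|∇u|² + F(u))·X - (∇u·X)∇u] · ν dS = 0 holds, where ν is the outward unit normal, X = (0,0,1), F(u) = ¼(u²-1)². -/
/-!
For any `C¹` potential `F`, the field `V = (½|∇u|² + F(u)) eₖ - ∂ₖu ∇u` has divergence
`∂ₖu (F'(u) - Δu)`: differentiating `½|∇u|²` in direction `eₖ` gives `∑ⱼ ∂ⱼu ∂ₖ∂ⱼu`, which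
cancels `∑ᵢ ∂ᵢu ∂ᵢ∂ₖu` from `-div(∂ₖu ∇u)` by symmetry of the Hessian. For
`F(u) = ¼(u² - 1)²` we have `F'(u) = u³ - u = Δu`, so `V` is divergence free on `Ω` and the
divergence theorem makes its flux through `∂Ω` vanish.
-/

open Real MeasureTheory

namespace Balancing

theorem hasFDerivAt_fderiv_apply {E G : Type*} [NormedAddCommGroup E] [NormedSpace ℝ E]
    [NormedAddCommGroup G] [NormedSpace ℝ G] {u : E → G} {x : E}
    (hu : DifferentiableAt ℝ (fderiv ℝ u) x) (v : E) :
    HasFDerivAt (fun y => fderiv ℝ u y v)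
      ((ContinuousLinearMap.apply ℝ G v).comp (fderiv ℝ (fderiv ℝ u) x)) x :=
  (ContinuousLinearMap.apply ℝ G v).hasFDerivAt.comp x hu.hasFDerivAt

variable {n : ℕ}

noncomputable def divergence (W : (Fin n → ℝ) → Fin n → ℝ) (x : Fin n → ℝ) : ℝ :=
  ∑ i, fderiv ℝ (fun y => W y i) x (Pi.single i 1)

noncomputable def laplacian (u : (Fin n → ℝ) → ℝ) (x : Fin n → ℝ) : ℝ :=
  ∑ i, fderiv ℝ (fun y => fderiv ℝ u y (Pi.single i 1)) x (Pi.single i 1)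

noncomputable def balancingField (F : ℝ → ℝ) (k : Fin n) (u : (Fin n → ℝ) → ℝ)
    (x : Fin n → ℝ) (i : Fin n) : ℝ :=
  ((1 / 2) * (∑ j, (fderiv ℝ u x (Pi.single j 1)) ^ 2) + F (u x)) * (if i = k then 1 else 0)
    - fderiv ℝ u x (Pi.single k 1) * fderiv ℝ u x (Pi.single i 1)

theorem contDiffOn_balancingField {F : ℝ → ℝ} (hF : ContDiff ℝ 1 F) (k : Fin n)
    {u : (Fin n → ℝ) → ℝ} {O : Set (Fin n → ℝ)} (hO : IsOpen O) (hu : ContDiffOn ℝ 2 u O) :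
    ContDiffOn ℝ 1 (balancingField F k u) O := by
  have hdu : ∀ v, ContDiffOn ℝ 1 (fun x => fderiv ℝ u x v) O := fun v =>
    (hu.fderiv_of_isOpen hO (by norm_num)).clm_apply contDiffOn_const
  refine contDiffOn_pi.2 fun i => ?_
  exact (((contDiffOn_const.mul (ContDiffOn.sum fun j _ => (hdu _).pow 2)).add
    (hF.comp_contDiffOn (hu.of_le one_le_two))).mul contDiffOn_const).sub ((hdu _).mul (hdu _))

theorem laplacian_eq_sum_fderiv_fderiv {u : (Fin n → ℝ) → ℝ} {x : Fin n → ℝ}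
    (hu : DifferentiableAt ℝ (fderiv ℝ u) x) :
    laplacian u x = ∑ i, fderiv ℝ (fderiv ℝ u) x (Pi.single i 1) (Pi.single i 1) := by
  simp only [laplacian, (hasFDerivAt_fderiv_apply hu _).fderiv,
    ContinuousLinearMap.comp_apply, ContinuousLinearMap.apply_apply]

theorem hasFDerivAt_half_sum_sq_fderiv {u : (Fin n → ℝ) → ℝ} {x : Fin n → ℝ}
    (hu : DifferentiableAt ℝ (fderiv ℝ u) x) :
    HasFDerivAt (fun y => (1 / 2) * ∑ j, (fderiv ℝ u y (Pi.single j 1)) ^ 2)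
      (∑ j, fderiv ℝ u x (Pi.single j 1) •
        (ContinuousLinearMap.apply ℝ ℝ (Pi.single j 1)).comp (fderiv ℝ (fderiv ℝ u) x)) x := by
  have h := HasFDerivAt.const_mul (HasFDerivAt.fun_sum (u := Finset.univ)
    fun j _ => (hasFDerivAt_fderiv_apply hu (Pi.single j 1)).pow 2) (1 / 2 : ℝ)
  refine h.congr_fderiv ?_
  ext v
  simp only [nsmul_eq_mul, Nat.cast_ofNat, Nat.add_one_sub_one, pow_one,
    _root_.smul_apply, _root_.sum_apply, ContinuousLinearMap.comp_apply,
    ContinuousLinearMap.apply_apply, smul_eq_mul, Finset.mul_sum]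
  exact Finset.sum_congr rfl fun j _ => by ring

theorem divergence_balancingField {F : ℝ → ℝ} {F' : ℝ} {u : (Fin n → ℝ) → ℝ}
    {x : Fin n → ℝ} (hu : ContDiffAt ℝ 2 u x) (hF : HasDerivAt F F' (u x)) (k : Fin n) :
    divergence (balancingField F k u) x =
      fderiv ℝ u x (Pi.single k 1) * (F' - laplacian u x) := by
  have hB : DifferentiableAt ℝ (fderiv ℝ u) x :=
    (hu.fderiv_right (m := 1) (by norm_num)).differentiableAt (by norm_num)
  have hsymm : ∀ v w, fderiv ℝ (fderiv ℝ u) x v w = fderiv ℝ (fderiv ℝ u) x w v :=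
    hu.isSymmSndFDerivAt (by simp)
  set B := fderiv ℝ (fderiv ℝ u) x
  set e : Fin n → Fin n → ℝ := fun j => Pi.single j 1
  set g : Fin n → ℝ := fun j => fderiv ℝ u x (e j)
  have hcomponent : ∀ i, fderiv ℝ (fun y => balancingField F k u y i) x (e i) =
      (∑ j, g j * B (e i) (e j) + F' * g i) * (if i = k then 1 else 0)
        - (g k * B (e i) (e i) + g i * B (e i) (e k)) := by
    intro i
    have h := (((hasFDerivAt_half_sum_sq_fderiv hB).add
      (hF.comp_hasFDerivAt x (hu.differentiableAt (by norm_num)).hasFDerivAt)).mul_const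
        (if i = k then (1 : ℝ) else 0)).sub
      ((hasFDerivAt_fderiv_apply hB (e k)).mul (hasFDerivAt_fderiv_apply hB (e i)))
    rw [(show HasFDerivAt (fun y => balancingField F k u y i) _ x from h).fderiv]
    split_ifs <;> simp [g, e, B]
  rw [divergence, Finset.sum_congr rfl fun i _ => hcomponent i, laplacian_eq_sum_fderiv_fderiv hB]
  simp only [Finset.sum_sub_distrib, mul_boole, Finset.sum_ite_eq', Finset.mem_univ, if_true,
    Finset.sum_add_distrib, ← Finset.mul_sum]
  rw [show ∑ j, g j * B (e k) (e j) = ∑ i, g i * B (e i) (e k) from by simp only [hsymm]]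
  ring

end Balancing

open Balancing in
theorem stmt_6_general (Ω : Set (Fin 3 → ℝ))
    (μ : Measure (Fin 3 → ℝ)) (ν : (Fin 3 → ℝ) → (Fin 3 → ℝ))
    -- the divergence theorem holds on `Ω` with surface measure `μ` and outward normal `ν`
    (hdiv : ∀ W : (Fin 3 → ℝ) → (Fin 3 → ℝ),
      ContDiffOn ℝ 1 (fun x => (W x : Fin 3 → ℝ)) (closure Ω) →
      ∫ x, (∑ i : Fin 3, W x i * ν x i) ∂μ =
        ∫ x in Ω, (∑ i : Fin 3, fderiv ℝ (fun y => W y i) x (Pi.single i 1)))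
    (O : Set (Fin 3 → ℝ)) (hO : IsOpen O) (hOΩ : closure Ω ⊆ O)
    (u : (Fin 3 → ℝ) → ℝ) (hu : ContDiffOn ℝ 2 u O)
    (heq : ∀ x ∈ O, (∑ i : Fin 3,
        fderiv ℝ (fun y => fderiv ℝ u y (Pi.single i 1)) x (Pi.single i 1))
        + u x - (u x) ^ 3 = 0)
    (V : (Fin 3 → ℝ) → (Fin 3 → ℝ))
    (hV : ∀ x i, V x i =
      ((1 / 2) * (∑ j : Fin 3, (fderiv ℝ u x (Pi.single j 1)) ^ 2)
          + (1 / 4) * ((u x) ^ 2 - 1) ^ 2) * (if i = 2 then (1 : ℝ) else 0)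
        - (fderiv ℝ u x (Pi.single 2 1)) * (fderiv ℝ u x (Pi.single i 1))) :
    ∫ x, (∑ i : Fin 3, V x i * ν x i) ∂μ = 0 := by
  set F : ℝ → ℝ := fun t => (1 / 4) * (t ^ 2 - 1) ^ 2
  have hVF : V = balancingField F 2 u := funext fun x => funext (hV x)
  have hF : ContDiff ℝ 1 F := by fun_prop
  rw [hdiv V (hVF ▸ (contDiffOn_balancingField hF 2 hO hu).mono hOΩ)]
  refine setIntegral_eq_zero_of_forall_eq_zero fun x hxΩ => ?_
  have hx : x ∈ O := hOΩ (subset_closure hxΩ)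
  have hF' : HasDerivAt F (u x ^ 3 - u x) (u x) :=
    ((((hasDerivAt_pow 2 (u x)).sub_const 1).fun_pow 2).const_mul (1 / 4 : ℝ)).congr_deriv
      (by norm_num; ring)
  have hdiv_x := divergence_balancingField (hu.contDiffAt (hO.mem_nhds hx)) hF' 2
  rw [divergence, ← hVF] at hdiv_x
  have hΔ : laplacian u x = u x ^ 3 - u x := by
    rw [laplacian]
    linarith [heq x hx]
  rw [hdiv_x, hΔ, sub_self, mul_zero]

/-- Balancing formula: for a bounded open domain `Ω ⊆ ℝ³` with (C¹) boundary —
encoded by a surface measure `μ` on `∂Ω` and an outward unit normal `ν` for which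
the divergence theorem holds — and a `C²` solution `u` of `-Δu = u - u³` on a
neighborhood of the closure of `Ω`, the flux of
`V = (½|∇u|² + F(u))·X - (∇u·X)∇u` through `∂Ω` vanishes:
`∫_{∂Ω} V · ν dS = 0`. -/
theorem stmt_6 (Ω : Set (Fin 3 → ℝ)) (hΩ : IsOpen Ω) (hΩb : Bornology.IsBounded Ω)
    (μ : Measure (Fin 3 → ℝ)) (ν : (Fin 3 → ℝ) → (Fin 3 → ℝ))
    (hμ : μ (frontier Ω)ᶜ = 0)
    -- the divergence theorem holds on `Ω` with surface measure `μ` and outward normal `ν`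
    (hdiv : ∀ W : (Fin 3 → ℝ) → (Fin 3 → ℝ),
      ContDiffOn ℝ 1 (fun x => (W x : Fin 3 → ℝ)) (closure Ω) →
      ∫ x, (∑ i : Fin 3, W x i * ν x i) ∂μ =
        ∫ x in Ω, (∑ i : Fin 3, fderiv ℝ (fun y => W y i) x (Pi.single i 1)))
    (O : Set (Fin 3 → ℝ)) (hO : IsOpen O) (hOΩ : closure Ω ⊆ O)
    (u : (Fin 3 → ℝ) → ℝ) (hu : ContDiffOn ℝ 2 u O)
    (heq : ∀ x ∈ O, (∑ i : Fin 3,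
        fderiv ℝ (fun y => fderiv ℝ u y (Pi.single i 1)) x (Pi.single i 1))
        + u x - (u x) ^ 3 = 0)
    (V : (Fin 3 → ℝ) → (Fin 3 → ℝ))
    (hV : ∀ x i, V x i =
      ((1 / 2) * (∑ j : Fin 3, (fderiv ℝ u x (Pi.single j 1)) ^ 2)
          + (1 / 4) * ((u x) ^ 2 - 1) ^ 2) * (if i = 2 then (1 : ℝ) else 0)
        - (fderiv ℝ u x (Pi.single 2 1)) * (fderiv ℝ u x (Pi.single i 1))) :
    ∫ x, (∑ i : Fin 3, V x i * ν x i) ∂μ = 0 :=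
  stmt_6_general Ω μ ν hdiv O hO hOΩ u hu heq V hV
end

section
/- Let c₀ > 0, C₀ > 0, and let p : (r₀,∞) → ℝ be C² satisfying (r p'/√(1+p'²))' = I₁(r) + I₂(r) where I₁ ≥ 0 and |I₂(r)| ≤ C₀ r⁻². If at some t* ≥ max(2C₀/δ̄, r₀) one has t* p'(t*)/√(1+p'(t*)²) ≥ √2/2 + δ̄ for some δ̄ > 0, then for all t > t*, t p'(t)/√(1+p'(t)²) ≥ √2/2 + δ̄/2. -/
open Real Set Filter Topology

/-!
With `F(r) = r p'/√(1+p'²)`, the function `F(r) - C₀/r` has derivative `I₁ + I₂ + C₀/r² ≥ 0`,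
so it is nondecreasing, and `F(t) ≥ F(t*) - C₀/t* + C₀/t ≥ √2/2 + δ/2` since `C₀/t* ≤ δ/2`.
When `t* = r₀` the equation gives nothing at `t*`; monotonicity still reaches the endpoint because,
by the mean value theorem, `p'(t*)` is a limit of values `p'(ξ)` with `ξ ↓ t*`.
-/

theorem mapClusterPt_prod_deriv_nhdsGT {f : ℝ → ℝ} {a : ℝ} (hf : DifferentiableAt ℝ f a)
    (hd : ∀ᶠ x in 𝓝[>] a, DifferentiableAt ℝ f x) :
    MapClusterPt (a, deriv f a) (𝓝[>] a) (fun x => (x, deriv f x)) := by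
  rw [((𝓝 a).basis_sets.prod_nhds (𝓝 (deriv f a)).basis_sets).mapClusterPt_iff_frequently]
  rintro ⟨U, V⟩ ⟨hU, hV⟩
  rw [frequently_iff]
  intro s hs
  obtain ⟨b, hab, hb⟩ := mem_nhdsGT_iff_exists_Ioo_subset.mp
    (inter_mem (inter_mem hs (nhdsWithin_le_nhds hU)) hd)
  have hslope : ∀ᶠ x in 𝓝[>] a, slope f a x ∈ V ∧ x ∈ Ioo a b :=
    ((hf.hasDerivAt.tendsto_slope.mono_left (nhdsGT_le_nhdsNE a)).eventually_mem hV).and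
      (Ioo_mem_nhdsGT hab)
  obtain ⟨x, hxV, hax, hxb⟩ := hslope.exists
  have hcont : ContinuousOn f (Icc a x) := fun y hy => by
    rcases hy.1.eq_or_lt with rfl | hay
    · exact hf.continuousAt.continuousWithinAt
    · exact (hb ⟨hay, hy.2.trans_lt hxb⟩).2.continuousAt.continuousWithinAt
  obtain ⟨ξ, hξ, hξeq⟩ := exists_deriv_eq_slope f hax hcont
    fun y hy => (hb ⟨hy.1, hy.2.trans hxb⟩).2.differentiableWithinAt
  have hξs := hb ⟨hξ.1, hξ.2.trans hxb⟩
  exact ⟨ξ, hξs.1.1, hξs.1.2, by rwa [hξeq, ← slope_def_field]⟩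

theorem le_of_eventually_le_nhdsGT_deriv {f : ℝ → ℝ} {Φ : ℝ × ℝ → ℝ} {a M : ℝ}
    (hf : DifferentiableAt ℝ f a) (hd : ∀ᶠ x in 𝓝[>] a, DifferentiableAt ℝ f x)
    (hΦ : ContinuousAt Φ (a, deriv f a)) (hle : ∀ᶠ x in 𝓝[>] a, Φ (x, deriv f x) ≤ M) :
    Φ (a, deriv f a) ≤ M :=
  isClosed_Iic.mem_of_mapClusterPt ((mapClusterPt_prod_deriv_nhdsGT hf hd).continuousAt_comp hΦ)
    hle

theorem monotoneOn_sub_div_of_hasDerivAt {F F' : ℝ → ℝ} {r₀ C : ℝ} (hr₀ : 0 ≤ r₀)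
    (hF : ∀ r ∈ Ioi r₀, HasDerivAt F (F' r) r) (hF' : ∀ r ∈ Ioi r₀, -(C / r ^ 2) ≤ F' r) :
    MonotoneOn (fun r => F r - C / r) (Ioi r₀) := by
  have hG : ∀ r ∈ Ioi r₀, HasDerivAt (fun r => F r - C / r) (F' r + C / r ^ 2) r := by
    intro r hr
    have hr0 : r ≠ 0 := (hr₀.trans_lt hr).ne'
    have hinv : HasDerivAt (fun r => C / r) (-(C / r ^ 2)) r := by
      simpa [div_eq_mul_inv] using (hasDerivAt_inv hr0).const_mul C
    simpa only [sub_neg_eq_add] using (hF r hr).fun_sub hinv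
  refine monotoneOn_of_hasDerivWithinAt_nonneg (f' := fun r => F' r + C / r ^ 2) (convex_Ioi r₀)
    (fun r hr => (hG r hr).continuousAt.continuousWithinAt) ?_ ?_ <;> rw [interior_Ioi]
  · exact fun r hr => (hG r hr).hasDerivWithinAt
  · exact fun r hr => by linarith [hF' r hr]

theorem stmt_14_general (r₀ C₀ δ : ℝ) (hr₀ : 0 < r₀) (hC₀ : 0 < C₀) (hδ : 0 < δ)
    (p I₁ I₂ : ℝ → ℝ)
    (hp : ContDiffOn ℝ 2 p (Ioi r₀))
    (hI₁ : ∀ r ∈ Ioi r₀, 0 ≤ I₁ r)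
    (hI₂ : ∀ r ∈ Ioi r₀, |I₂ r| ≤ C₀ / r ^ 2)
    (hode : ∀ r ∈ Ioi r₀,
      HasDerivAt (fun s => s * deriv p s / Real.sqrt (1 + (deriv p s) ^ 2))
        (I₁ r + I₂ r) r)
    (t' : ℝ) (ht' : max (2 * C₀ / δ) r₀ ≤ t')
    (hflux : Real.sqrt 2 / 2 + δ ≤ t' * deriv p t' / Real.sqrt (1 + (deriv p t') ^ 2)) :
    ∀ t : ℝ, t' < t →
      Real.sqrt 2 / 2 + δ / 2 ≤ t * deriv p t / Real.sqrt (1 + (deriv p t) ^ 2) := by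
  intro t ht
  obtain ⟨hδt', hr₀t'⟩ := max_le_iff.mp ht'
  have ht'pos : 0 < t' := hr₀.trans_le hr₀t'
  set Φ : ℝ × ℝ → ℝ := fun q => q.1 * q.2 / √(1 + q.2 ^ 2) - C₀ / q.1
  have hmono : MonotoneOn (fun r => Φ (r, deriv p r)) (Ioi r₀) :=
    monotoneOn_sub_div_of_hasDerivAt hr₀.le hode fun r hr => by
      linarith [neg_abs_le (I₂ r), hI₁ r hr, hI₂ r hr]
  have hdiff : ∀ r ∈ Ioi r₀, DifferentiableAt ℝ p r := fun r hr =>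
    (hp.differentiableOn (by norm_num) r hr).differentiableAt (isOpen_Ioi.mem_nhds hr)
  -- otherwise `deriv p t' = 0` and the flux at `t'` would be `0`
  have hdifft' : DifferentiableAt ℝ p t' := by
    by_contra h
    rw [deriv_zero_of_not_differentiableAt h] at hflux
    norm_num at hflux
    linarith [sqrt_nonneg 2]
  have hΦ : ContinuousAt Φ (t', deriv p t') := by
    have := ht'pos.ne'
    fun_prop (disch := positivity)
  have hstep : Φ (t', deriv p t') ≤ Φ (t, deriv p t) := by
    refine le_of_eventually_le_nhdsGT_deriv hdifft' ?_ hΦ ?_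
    · filter_upwards [self_mem_nhdsWithin] with r hr using hdiff r (hr₀t'.trans_lt hr)
    · filter_upwards [Ioo_mem_nhdsGT ht] with r hr
      exact hmono (hr₀t'.trans_lt hr.1) (hr₀t'.trans_lt ht) hr.2.le
  have hCt' : C₀ / t' ≤ δ / 2 := by
    rw [div_le_iff₀ hδ] at hδt'
    rw [div_le_iff₀ ht'pos]
    linarith
  have hCt : 0 < C₀ / t := div_pos hC₀ (ht'pos.trans ht)
  simp only [Φ] at hstep
  linarith

/-- Flux monotonicity: let `p` be `C²` on `(r₀,∞)` with
`(r p'/√(1+p'²))' = I₁ + I₂` there, where `I₁ ≥ 0` and `|I₂(r)| ≤ C₀ r⁻²`.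
If at some `t* ≥ max (2C₀/δ̄) r₀` one has
`t* p'(t*)/√(1+p'(t*)²) ≥ √2/2 + δ̄`, then for all `t > t*`,
`t p'(t)/√(1+p'(t)²) ≥ √2/2 + δ̄/2`. -/
theorem stmt_14 (r₀ C₀ δ : ℝ) (hr₀ : 0 < r₀) (hC₀ : 0 < C₀) (hδ : 0 < δ)
    (p I₁ I₂ : ℝ → ℝ)
    (hp : ContDiffOn ℝ 2 p (Ioi r₀))
    (hI₁c : ContinuousOn I₁ (Ioi r₀)) (hI₂c : ContinuousOn I₂ (Ioi r₀))
    (hI₁ : ∀ r ∈ Ioi r₀, 0 ≤ I₁ r)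
    (hI₂ : ∀ r ∈ Ioi r₀, |I₂ r| ≤ C₀ / r ^ 2)
    (hode : ∀ r ∈ Ioi r₀,
      HasDerivAt (fun s => s * deriv p s / Real.sqrt (1 + (deriv p s) ^ 2))
        (I₁ r + I₂ r) r)
    (t' : ℝ) (ht' : max (2 * C₀ / δ) r₀ ≤ t')
    (hflux : Real.sqrt 2 / 2 + δ ≤ t' * deriv p t' / Real.sqrt (1 + (deriv p t') ^ 2)) :
    ∀ t : ℝ, t' < t →
      Real.sqrt 2 / 2 + δ / 2 ≤ t * deriv p t / Real.sqrt (1 + (deriv p t) ^ 2) :=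
  stmt_14_general r₀ C₀ δ hr₀ hC₀ hδ p I₁ I₂ hp hI₁ hI₂ hode t' ht' hflux
end
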